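/- Every translational Killing tensor satisfies the Tonolo–Schouten–Nijenhuis (TSN) orthogonal-integrability conditions: let K be the symmetric tensor field on ℝ³ with components K¹¹ = a₁ + 2b₁₃y + c₃y², K¹² = α₃ − b₁₃x + b₂₃y − c₃xy, K²² = a₂ − 2b₂₃x + c₃x², K³³ = a₃, K¹³ = K²³ = 0, for arbitrary real parameters a₁, a₂, a₃, α₃, b₁₃, b₂₃, c₃. Define N^i_{jk} := Σ_ℓ [ K_{iℓ}·½(∂_k K_{ℓj} − ∂_j K_{ℓk}) + ½(K_{ℓj} ∂_ℓ K_{ik} − K_{ℓk} ∂_ℓ K_{ij}) ]. Then, identically on ℝ³, (i) the totally antisymmetric part over (i,j,k) of N_{ijk} vanishes, (ii) the totally antisymmetric part over (i,j,k) of Σ_ℓ N_{ℓjk} K_{iℓ} vanishes, and (iii) the totally antisymmetric part over (i,j,k) of Σ_{ℓ,m} N_{ℓjk} K_{im} K_{mℓ} vanishes. -/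

import Mathlib

/-!
A translational Killing tensor splits as `K = A(x, y) ⊕ a₃ dz²` with `A` independent of `z`.
For such a field every term of `N_{ijk}` with an index along `z` contains either a vanishing
off-diagonal entry of `K` or a derivative of a constant, so `N` lives on the `(x, y)`-plane.
Contracting with `K` preserves the splitting, so all three arrays in the TSN conditions are
planar, and a totally antisymmetric 3-index array on a plane vanishes.
-/

open Matrix

/-- 3×3 real matrices. -/
abbrev M3 := Matrix (Fin 3) (Fin 3) ℝ

/-- Partial derivative `∂_k f` at `x`. -/
noncomputable def pder (k : Fin 3) (f : (Fin 3 → ℝ) → ℝ) (x : Fin 3 → ℝ) : ℝ :=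
  fderiv ℝ f x (Pi.single k 1)

/-- The translational Killing tensor with parameters `a₁ a₂ a₃ α₃ b₁₃ b₂₃ c₃`. -/
def Kt (a₁ a₂ a₃ α₃ b₁₃ b₂₃ c₃ : ℝ) (p : Fin 3 → ℝ) : M3 :=
  !![a₁ + 2 * b₁₃ * p 1 + c₃ * (p 1) ^ 2,
       α₃ - b₁₃ * p 0 + b₂₃ * p 1 - c₃ * p 0 * p 1, 0;
     α₃ - b₁₃ * p 0 + b₂₃ * p 1 - c₃ * p 0 * p 1,
       a₂ - 2 * b₂₃ * p 0 + c₃ * (p 0) ^ 2, 0;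
     0, 0, a₃]

/-- The Nijenhuis tensor `N^i_{jk}` of a symmetric tensor field `K` (indices
raised/lowered with the identity metric). -/
noncomputable def Nij (K : (Fin 3 → ℝ) → M3) (x : Fin 3 → ℝ) (i j k : Fin 3) : ℝ :=
  ∑ l : Fin 3,
    (K x i l * ((1 : ℝ) / 2)
        * (pder k (fun y => K y l j) x - pder j (fun y => K y l k) x)
      + ((1 : ℝ) / 2)
        * (K x l j * pder l (fun y => K y i k) x
            - K x l k * pder l (fun y => K y i j) x))

/-- Totally antisymmetric part of a 3-index array over `(i,j,k)`. -/
noncomputable def alt3 (T : Fin 3 → Fin 3 → Fin 3 → ℝ) (i j k : Fin 3) : ℝ :=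
  ((1 : ℝ) / 6) * (T i j k - T i k j + T j k i - T j i k + T k i j - T k j i)

lemma pder_eq_zero_of_translate_invariant {k : Fin 3} {f : (Fin 3 → ℝ) → ℝ}
    (hf : ∀ y (t : ℝ), f (y + t • Pi.single k 1) = f y) (x : Fin 3 → ℝ) :
    pder k f x = 0 := by
  by_cases hdiff : DifferentiableAt ℝ f x
  · rw [pder, ← hdiff.lineDeriv_eq_fderiv, lineDeriv]
    simp only [hf, deriv_const]
  · rw [pder, fderiv_zero_of_not_differentiableAt hdiff, _root_.zero_apply]

lemma Nij_swap (K : (Fin 3 → ℝ) → M3) (x : Fin 3 → ℝ) (i j k : Fin 3) :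
    Nij K x i k j = -Nij K x i j k := by
  rw [Nij, Nij, ← Finset.sum_neg_distrib]
  exact Finset.sum_congr rfl fun _ _ => by ring

/-- `K = A(x, y) ⊕ c dz²` for the splitting `ℝ³ = ℝ² ⊕ ℝ`; index `2` is the `z`-axis. -/
structure IsPlaneSplit (K : (Fin 3 → ℝ) → M3) : Prop where
  isSymm : ∀ y, (K y).IsSymm
  apply_two_left_of_ne : ∀ y l, l ≠ 2 → K y 2 l = 0
  apply_two_two : ∀ y y', K y 2 2 = K y' 2 2
  translate_two : ∀ y (t : ℝ), K (y + t • Pi.single 2 1) = K y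

namespace IsPlaneSplit

variable {K : (Fin 3 → ℝ) → M3} (hK : IsPlaneSplit K)
include hK

lemma apply_two_right_of_ne (y : Fin 3 → ℝ) {l : Fin 3} (hl : l ≠ 2) : K y l 2 = 0 := by
  rw [← (hK.isSymm y).apply, hK.apply_two_left_of_ne y l hl]

lemma apply_two_left_eq (j : Fin 3) (y y' : Fin 3 → ℝ) : K y 2 j = K y' 2 j := by
  by_cases hj : j = 2
  · subst hj; exact hK.apply_two_two y y'
  · rw [hK.apply_two_left_of_ne y j hj, hK.apply_two_left_of_ne y' j hj]

lemma pder_two (i j : Fin 3) (x : Fin 3 → ℝ) : pder 2 (fun y => K y i j) x = 0 :=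
  pder_eq_zero_of_translate_invariant (fun y t => by rw [hK.translate_two]) x

lemma pder_apply_two_left (l j : Fin 3) (x : Fin 3 → ℝ) : pder l (fun y => K y 2 j) x = 0 :=
  pder_eq_zero_of_translate_invariant (fun _ _ => hK.apply_two_left_eq j _ _) x

lemma pder_apply_two_right (l i : Fin 3) (x : Fin 3 → ℝ) :
    pder l (fun y => K y i 2) x = 0 := by
  simpa only [(hK.isSymm _).apply] using hK.pder_apply_two_left l i x

lemma Nij_two_left (x : Fin 3 → ℝ) (j k : Fin 3) : Nij K x 2 j k = 0 := by
  refine Finset.sum_eq_zero fun l _ => ?_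
  by_cases hl : l = 2
  · subst hl; simp only [hK.pder_apply_two_left, sub_self, mul_zero, add_zero]
  · simp only [hK.apply_two_left_of_ne x l hl, hK.pder_apply_two_left, zero_mul, mul_zero,
      sub_self, add_zero]

lemma Nij_two_right (x : Fin 3 → ℝ) (i j : Fin 3) : Nij K x i j 2 = 0 := by
  refine Finset.sum_eq_zero fun l _ => ?_
  by_cases hl : l = 2
  · subst hl; simp only [hK.pder_two, hK.pder_apply_two_right, sub_self, mul_zero, add_zero]
  · simp only [hK.apply_two_right_of_ne x hl, hK.pder_two, hK.pder_apply_two_right, zero_mul,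
      mul_zero, sub_self, add_zero]

end IsPlaneSplit

def IsPlanar (T : Fin 3 → Fin 3 → Fin 3 → ℝ) : Prop :=
  ∀ i j k, i = 2 ∨ j = 2 ∨ k = 2 → T i j k = 0

lemma IsPlaneSplit.isPlanar_Nij {K : (Fin 3 → ℝ) → M3} (hK : IsPlaneSplit K)
    (x : Fin 3 → ℝ) : IsPlanar (Nij K x) := by
  rintro i j k (rfl | rfl | rfl)
  · exact hK.Nij_two_left x j k
  · rw [Nij_swap, hK.Nij_two_right, neg_zero]
  · exact hK.Nij_two_right x i j

namespace IsPlanar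

variable {T : Fin 3 → Fin 3 → Fin 3 → ℝ}

-- There is no nonzero alternating 3-form on a plane.
lemma alt3_eq_zero (hT : IsPlanar T) (i j k : Fin 3) : alt3 T i j k = 0 := by
  have h₀ : ∀ a b, T 2 a b = 0 ∧ T a 2 b = 0 ∧ T a b 2 = 0 := fun a b =>
    ⟨hT _ _ _ (.inl rfl), hT _ _ _ (.inr (.inl rfl)), hT _ _ _ (.inr (.inr rfl))⟩
  fin_cases i <;> fin_cases j <;> fin_cases k <;> simp [alt3, h₀]

lemma contract (hT : IsPlanar T) {M : M3} (hM : ∀ l, l ≠ 2 → M 2 l = 0) :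
    IsPlanar fun i j k => ∑ l, T l j k * M i l := by
  rintro i j k (rfl | hj | hk)
  · refine Finset.sum_eq_zero fun l _ => ?_
    by_cases hl : l = 2
    · rw [hl, hT 2 j k (.inl rfl), zero_mul]
    · rw [hM l hl, mul_zero]
  · exact Finset.sum_eq_zero fun l _ => by rw [hT l j k (.inr (.inl hj)), zero_mul]
  · exact Finset.sum_eq_zero fun l _ => by rw [hT l j k (.inr (.inr hk)), zero_mul]

end IsPlanar

lemma isPlaneSplit_Kt (a₁ a₂ a₃ α₃ b₁₃ b₂₃ c₃ : ℝ) :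
    IsPlaneSplit (Kt a₁ a₂ a₃ α₃ b₁₃ b₂₃ c₃) where
  isSymm y := by
    ext i j
    fin_cases i <;> fin_cases j <;> simp [Kt]
  apply_two_left_of_ne y l hl := by
    fin_cases l <;> simp_all [Kt]
  apply_two_two y y' := by simp [Kt]
  translate_two y t := by
    ext i j
    fin_cases i <;> fin_cases j <;> simp [Kt]

/-- STATEMENT 9: every translational Killing tensor satisfies the
Tonolo–Schouten–Nijenhuis conditions. -/
theorem translational_Killing_tensor_satisfies_TSN
    (a₁ a₂ a₃ α₃ b₁₃ b₂₃ c₃ : ℝ) (x : Fin 3 → ℝ) (i j k : Fin 3) :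
    alt3 (fun i' j' k' => Nij (Kt a₁ a₂ a₃ α₃ b₁₃ b₂₃ c₃) x i' j' k') i j k = 0 ∧
    alt3 (fun i' j' k' => ∑ l : Fin 3,
        Nij (Kt a₁ a₂ a₃ α₃ b₁₃ b₂₃ c₃) x l j' k'
          * Kt a₁ a₂ a₃ α₃ b₁₃ b₂₃ c₃ x i' l) i j k = 0 ∧
    alt3 (fun i' j' k' => ∑ l : Fin 3, ∑ m : Fin 3,
        Nij (Kt a₁ a₂ a₃ α₃ b₁₃ b₂₃ c₃) x l j' k'
          * Kt a₁ a₂ a₃ α₃ b₁₃ b₂₃ c₃ x i' m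
          * Kt a₁ a₂ a₃ α₃ b₁₃ b₂₃ c₃ x m l) i j k = 0 := by
  set K := Kt a₁ a₂ a₃ α₃ b₁₃ b₂₃ c₃
  have hK : IsPlaneSplit K := isPlaneSplit_Kt a₁ a₂ a₃ α₃ b₁₃ b₂₃ c₃
  have hN : IsPlanar (Nij K x) := hK.isPlanar_Nij x
  have hNK : IsPlanar fun i j k => ∑ l, Nij K x l j k * K x i l :=
    hN.contract (hK.apply_two_left_of_ne x)
  have hNKK : IsPlanar fun i j k => ∑ m, (∑ l, Nij K x l j k * K x m l) * K x i m :=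
    hNK.contract (hK.apply_two_left_of_ne x)
  refine ⟨hN.alt3_eq_zero i j k, hNK.alt3_eq_zero i j k, ?_⟩
  convert hNKK.alt3_eq_zero i j k using 2
  ext i' j' k'
  rw [Finset.sum_comm]
  simp only [Finset.sum_mul, mul_assoc, mul_comm (K x i' _)]
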